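/- An odd positive integer n ≥ 3 is prime if and only if β(n,r) ≡ 0 (mod n) for all integers r with 2 ≤ r < n, where β(n,r) = (-1)^⌊r/2⌋ · C((n-1)/2 - ⌈r/2⌉, ⌊r/2⌋) − C((n-1)/2, r) · (-2)^r. -/

import Mathlib

/-!
Write `n = 2m + 1`. Since `r! · C(m, r) · (-2)^r = ∏_{j<r} (2j + 1 - n)`, modulo `n` both
terms of `β(n, r)`, once multiplied by `r!`, become products of odd numbers, and with
`k = ⌊r/2⌋`, `c = ⌈r/2⌉` the identity `r! = 2^k k! ∏_{j<c} (2j + 1)` makes them agree.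
Hence `β(n, r) ≡ 0` as soon as `r!` is invertible modulo `n`, i.e. for `r` below the least
prime factor `p` of `n`.
For `r = p < n` the factor `p` of `p!` must be cancelled over `ℤ` first; it reappears in the
middle factor `p - n = p (1 - n/p)`, and one finds `β(n, p) ≡ n/p ≢ 0 (mod n)`.
-/

open Finset
open scoped Nat

def beta (n r : ℕ) : ℤ :=
  (-1) ^ (r / 2) * (((n - 1) / 2 - (r + 1) / 2).choose (r / 2) : ℤ)
    - (((n - 1) / 2).choose r : ℤ) * (-2) ^ r

section CommRing

variable {R : Type*} [CommRing R]

theorem factorial_mul_choose_mul_neg_two_pow (m r : ℕ) :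
    (r ! : R) * (m.choose r * (-2) ^ r) = ∏ j ∈ range r, (2 * (j : R) + 1 - (2 * m + 1)) := by
  have h : (r ! * m.choose r : R) = ∏ j ∈ range r, ((m : R) - j) := by
    rw [← descPochhammer_eval_eq_prod_range, descPochhammer_eval_eq_descFactorial,
      Nat.descFactorial_eq_factorial_mul_choose, Nat.cast_mul]
  calc (r ! : R) * (m.choose r * (-2) ^ r) = (-2) ^ r * ∏ j ∈ range r, ((m : R) - j) := by
        rw [← h]; ring
    _ = ∏ j ∈ range r, (-2 * ((m : R) - j)) := by rw [prod_mul_distrib, prod_const, card_range]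
    _ = ∏ j ∈ range r, (2 * (j : R) + 1 - (2 * m + 1)) := prod_congr rfl fun j _ => by ring

theorem factorial_mul_choose_sub_mul_neg_two_pow {m : ℕ} (hm : (2 * m + 1 : R) = 0)
    {c : ℕ} (hc : c ≤ m) (k : ℕ) :
    (k ! : R) * ((m - c).choose k * (-2) ^ k) = ∏ j ∈ range k, (2 * ((c : R) + j) + 1) := by
  rw [factorial_mul_choose_mul_neg_two_pow]
  refine prod_congr rfl fun j _ => ?_
  push_cast [hc]
  linear_combination (-1 : R) * hm

end CommRing

theorem factorial_eq_two_pow_mul_factorial_mul_prod_odd (r : ℕ) :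
    r ! = 2 ^ (r / 2) * (r / 2)! * ∏ j ∈ range ((r + 1) / 2), (2 * j + 1) := by
  induction r using Nat.twoStepInduction with
  | zero => rfl
  | one => rfl
  | more r ih _ =>
    rw [show (r + 2) / 2 = r / 2 + 1 by omega, show (r + 2 + 1) / 2 = (r + 1) / 2 + 1 by omega,
      prod_range_succ, Nat.factorial_succ, Nat.factorial_succ, Nat.factorial_succ, pow_succ, ih]
    rcases Nat.even_or_odd' r with ⟨k, rfl | rfl⟩
    · rw [show (2 * k + 1) / 2 = k by omega, show 2 * k / 2 = k by omega]; ring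
    · rw [show (2 * k + 1 + 1) / 2 = k + 1 by omega, show (2 * k + 1) / 2 = k by omega]; ring

theorem natCast_mul_prod_odd_eq {n k s : ℕ} (hn : n = (2 * k + 1) * s) :
    (s : ZMod n) * ∏ j ∈ range k, (2 * ((k : ZMod n) + 1 + j) + 1) = s * (2 ^ k * k !) := by
  have hmod : ∏ j ∈ range k, (2 * (k + 1 + j) + 1) ≡ 2 ^ k * k ! [MOD 2 * k + 1] := by
    have h : ∏ j ∈ range k, 2 * (j + 1) = 2 ^ k * k ! := by
      rw [prod_mul_distrib, prod_const, card_range, prod_range_add_one_eq_factorial]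
    rw [← h]
    refine Nat.ModEq.prod fun j _ => ?_
    rw [show 2 * (k + 1 + j) + 1 = 2 * (j + 1) + (2 * k + 1) by ring]
    exact Nat.add_modEq_right
  have := hmod.mul_left' s
  rw [mul_comm s, ← hn, ← ZMod.natCast_eq_natCast_iff] at this
  push_cast at this
  exact this

theorem isUnit_factorial_of_lt_minFac {n r : ℕ} (hr : r < n.minFac) : IsUnit (r ! : ZMod n) := by
  rcases eq_or_ne n 1 with rfl | hn
  · exact isUnit_of_subsingleton _
  · exact (ZMod.isUnit_iff_coprime _ _).2 ((Nat.coprime_factorial_iff hn).2 hr).symm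

theorem beta_cast_eq_zero_of_lt_minFac {n r : ℕ} (hn : Odd n) (hr : r < n.minFac) :
    (beta n r : ZMod n) = 0 := by
  obtain ⟨m, hm⟩ := hn
  have hm0 : (2 * m + 1 : ZMod n) = 0 := by
    exact_mod_cast (ZMod.natCast_eq_zero_iff (2 * m + 1) n).2 (hm ▸ dvd_rfl)
  have hrm : r ≤ 2 * m := by have := Nat.minFac_le (show 0 < n by omega); omega
  set k := r / 2
  set c := (r + 1) / 2
  have hfac : (r ! : ZMod n) = 2 ^ k * k ! * ∏ j ∈ range c, (2 * (j : ZMod n) + 1) :=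
    mod_cast congrArg (Nat.cast (R := ZMod n))
      (factorial_eq_two_pow_mul_factorial_mul_prod_odd r)
  have hsplit : ∏ j ∈ range r, (2 * (j : ZMod n) + 1) =
      (∏ j ∈ range c, (2 * (j : ZMod n) + 1)) *
        ∏ j ∈ range k, (2 * ((c : ZMod n) + j) + 1) := by
    rw [show r = c + k by omega, prod_range_add]
    push_cast
    rfl
  have hT : (r ! : ZMod n) * (m.choose r * (-2) ^ r) =
      ∏ j ∈ range r, (2 * (j : ZMod n) + 1) := by
    simpa using factorial_mul_choose_sub_mul_neg_two_pow hm0 (Nat.zero_le m) r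
  have hA := factorial_mul_choose_sub_mul_neg_two_pow hm0 (show c ≤ m by omega) k
  rw [neg_pow] at hA
  refine (isUnit_factorial_of_lt_minFac hr).mul_right_eq_zero.1 ?_
  simp only [beta, show (n - 1) / 2 = m by omega]
  push_cast
  linear_combination (-1) ^ k * (((m - c).choose k : ℕ) : ZMod n) * hfac
    + (∏ j ∈ range c, (2 * (j : ZMod n) + 1)) * hA - hT - hsplit

theorem factorial_mul_choose_mul_neg_two_pow_of_eq_mul {m k : ℕ} {s : ℤ}
    (h : (2 * m + 1 : ℤ) = (2 * k + 1) * s) :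
    ((2 * k)! : ℤ) * (m.choose (2 * k + 1) * (-2) ^ (2 * k + 1)) =
      (1 - s) * (∏ j ∈ range k, (2 * (j : ℤ) + 1 - (2 * m + 1))) *
        ∏ j ∈ range k, (2 * ((k : ℤ) + 1 + j) + 1 - (2 * m + 1)) := by
  refine mul_left_cancel₀ (by omega : (2 * k + 1 : ℤ) ≠ 0) ?_
  calc (2 * k + 1 : ℤ) * (((2 * k)! : ℤ) * (m.choose (2 * k + 1) * (-2) ^ (2 * k + 1)))
      = ((2 * k + 1)! : ℤ) * (m.choose (2 * k + 1) * (-2) ^ (2 * k + 1)) := by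
        push_cast [Nat.factorial_succ]; ring
    _ = ∏ j ∈ range (k + 1 + k), (2 * (j : ℤ) + 1 - (2 * m + 1)) := by
        rw [factorial_mul_choose_mul_neg_two_pow, show k + 1 + k = 2 * k + 1 by ring]
    _ = _ := by
        rw [prod_range_add, prod_range_succ]
        push_cast
        linear_combination -(∏ j ∈ range k, (2 * (j : ℤ) + 1 - (2 * m + 1))) *
          (∏ j ∈ range k, (2 * ((k : ℤ) + 1 + j) + 1 - (2 * m + 1))) * h

theorem beta_minFac_cast {n : ℕ} (hn : Odd n) (hn1 : n ≠ 1) (hnp : ¬ n.Prime) :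
    (beta n n.minFac : ZMod n) = (n / n.minFac : ℕ) := by
  obtain ⟨k, hk⟩ := hn.of_dvd_nat (Nat.minFac_dvd n)
  obtain ⟨s, hs⟩ := Nat.minFac_dvd n
  obtain ⟨m, hm⟩ := hn
  have hlt := (Nat.not_prime_iff_minFac_lt (by omega)).1 hnp
  rw [hk] at hs hlt ⊢
  have hunit : IsUnit ((2 * k)! : ZMod n) := isUnit_factorial_of_lt_minFac (by omega)
  have hm0 : (2 * m + 1 : ZMod n) = 0 := by
    exact_mod_cast (ZMod.natCast_eq_zero_iff (2 * m + 1) n).2 (hm ▸ dvd_rfl)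
  have hfac : ((2 * k)! : ZMod n) = 2 ^ k * k ! * ∏ j ∈ range k, (2 * (j : ZMod n) + 1) := by
    have := factorial_eq_two_pow_mul_factorial_mul_prod_odd (2 * k)
    rw [show 2 * k / 2 = k by omega, show (2 * k + 1) / 2 = k by omega] at this
    exact_mod_cast congrArg (Nat.cast (R := ZMod n)) this
  have hA := factorial_mul_choose_sub_mul_neg_two_pow hm0 (show k + 1 ≤ m by omega) k
  rw [neg_pow] at hA
  push_cast at hA
  have hT := congrArg (Int.cast (R := ZMod n)) (factorial_mul_choose_mul_neg_two_pow_of_eq_mul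
    (m := m) (k := k) (s := s) (by exact_mod_cast hm.symm.trans hs))
  push_cast at hT
  simp only [hm0, sub_zero] at hT
  have hQ := natCast_mul_prod_odd_eq hs
  refine hunit.mul_left_cancel ?_
  simp only [beta, show (n - 1) / 2 = m by omega, show (2 * k + 1) / 2 = k by omega,
    show (2 * k + 1 + 1) / 2 = k + 1 by omega,
    hs ▸ Nat.mul_div_cancel_left s (by omega : 0 < 2 * k + 1)]
  push_cast
  -- `(2k)! β = D Q - (1 - s) D Q = s D Q = s (2k)!`, where `D = ∏_{j<k} (2j + 1)` and
  -- `Q = ∏_{j<k} (2(k + 1 + j) + 1)`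
  linear_combination ((-1) ^ k * (((m - (k + 1)).choose k : ℕ) : ZMod n) - s) * hfac
    + (∏ j ∈ range k, (2 * (j : ZMod n) + 1)) * (hA + hQ) - hT

theorem prime_iff_beta_eq_zero (n : ℕ) (hn : Odd n) (h3 : 3 ≤ n) :
    n.Prime ↔ ∀ r : ℕ, 2 ≤ r → r < n →
      (n : ℤ) ∣ ((-1) ^ (r / 2) * (((n - 1) / 2 - (r + 1) / 2).choose (r / 2) : ℤ)
        - (((n - 1) / 2).choose r : ℤ) * (-2) ^ r) := by
  refine ⟨fun hp r _ hr => ?_, fun h => by_contra fun hnp => ?_⟩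
  · exact (ZMod.intCast_zmod_eq_zero_iff_dvd (beta n r) n).1
      (beta_cast_eq_zero_of_lt_minFac hn (hp.minFac_eq.symm ▸ hr))
  · have hp := Nat.minFac_prime (show n ≠ 1 by omega)
    have hlt := (Nat.not_prime_iff_minFac_lt (by omega)).1 hnp
    have hβ := (ZMod.intCast_zmod_eq_zero_iff_dvd (beta n n.minFac) n).2 (h _ hp.two_le hlt)
    rw [beta_minFac_cast hn (by omega) hnp, ZMod.natCast_eq_zero_iff] at hβ
    have hpos : 0 < n / n.minFac := Nat.div_pos (Nat.minFac_le (by omega)) hp.pos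
    exact absurd (Nat.le_of_dvd hpos hβ) (not_le.2 (Nat.div_lt_self (by omega) hp.one_lt))
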